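/- The tensor product of processes is injective up to failures equivalence: if P₁ ⊗ P₂ ≈_f Q₁ ⊗ Q₂ then P₁ ≈_f Q₁ and P₂ ≈_f Q₂. -/

import Mathlib

set_option linter.unnecessarySeqFocus false

/-! # CCS with simultaneous actions (Abramsky, "Process Realizability") -/

/-- Labels: names (`inl`) and co-names (`inr`). -/
abbrev Label : Type := ℕ ⊕ ℕ

/-- The involution `λ ↦ λ̄` exchanging names and co-names. -/
def Label.bar : Label → Label
  | .inl n => .inr n
  | .inr n => .inl n

/-- Actions: finite sets of labels, performed simultaneously.  `τ = ∅`. -/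
abbrev Act : Type := Finset Label

/-- A renaming: a partial injective function on labels preserving the involution. -/
structure Renaming where
  toFun : Label → Option Label
  inj : ∀ ⦃x y z : Label⦄, toFun x = some z → toFun y = some z → x = y
  bar : ∀ x : Label, toFun (Label.bar x) = (toFun x).map Label.bar

/-- The pointwise extension of a renaming to actions. -/
def Renaming.onAction (f : Renaming) (a : Act) : Act :=
  a.filterMap f.toFun (fun _ _ _ hx hy => f.inj (Option.mem_def.mp hx) (Option.mem_def.mp hy))

/-- Guarded process terms of CCS with simultaneous actions:
prefix, countably-indexed guarded sums (all guards non-`τ`), parallel composition,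
restriction, renaming, process variables (de Bruijn) and recursion. -/
inductive Proc : Type where
  | pre (a : Act) (P : Proc)
  | sum (I : Set ℕ) (act : ℕ → Act) (cont : ℕ → Proc) (hg : ∀ n ∈ I, (act n).Nonempty)
  | par (P Q : Proc)
  | restrict (P : Proc) (L : Set Label)
  | rename (P : Proc) (f : Renaming)
  | var (n : ℕ)
  | fix (P : Proc)

/-- The inactive process `0` (the empty sum). -/
def Proc.nil : Proc := .sum ∅ (fun _ => ∅) (fun _ => .var 0) (by simp)

/-- Substitution of a process for the variable with de Bruijn index `d`. -/
def Proc.subst (R : Proc) : ℕ → Proc → Proc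
  | d, .pre a P => .pre a (Proc.subst R d P)
  | d, .sum I act cont hg => .sum I act (fun n => Proc.subst R d (cont n)) hg
  | d, .par P Q => .par (Proc.subst R d P) (Proc.subst R d Q)
  | d, .restrict P L => .restrict (Proc.subst R d P) L
  | d, .rename P f => .rename (Proc.subst R d P) f
  | d, .var n => if n = d then R else .var n
  | d, .fix P => .fix (Proc.subst R (d + 1) P)

/-- The labelled transition relation, with the generalized synchronization rule
for simultaneous (compound) actions. -/
inductive Step : Proc → Act → Proc → Prop where
  | pre {a P} : Step (.pre a P) a P
  | sum {I act cont hg} (j : ℕ) (hj : j ∈ I) : Step (.sum I act cont hg) (act j) (cont j)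
  | restrict {P a Q L} : Step P a Q → (∀ l ∈ a, l ∉ L ∧ Label.bar l ∉ L) →
      Step (.restrict P L) a (.restrict Q L)
  | rename {P a Q} {f : Renaming} : Step P a Q → (∀ l ∈ a, (f.toFun l).isSome) →
      Step (.rename P f) (f.onAction a) (.rename Q f)
  | fix {P a Q} : Step (Proc.subst (.fix P) 0 P) a Q → Step (.fix P) a Q
  | parL {P a P' Q} : Step P a P' → Step (.par P Q) a (.par P' Q)
  | parR {P Q a Q'} : Step Q a Q' → Step (.par P Q) a (.par P Q')
  | sync {P Q P' Q' a b c} : Step P (a ∪ b) P' → Step Q (b.image Label.bar ∪ c) Q' →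
      Disjoint a b → Disjoint (b.image Label.bar) c → Disjoint a c →
      Step (.par P Q) (a ∪ c) (.par P' Q')

/-- Zero or more silent (`τ`) transitions. -/
def TauStar : Proc → Proc → Prop :=
  Relation.ReflTransGen (fun P Q => Step P ∅ Q)

/-- Observable transition `P ⟹a Q`: `τ* a τ*`. -/
def Obs (P : Proc) (a : Act) (Q : Proc) : Prop :=
  ∃ P₁ P₂, TauStar P P₁ ∧ Step P₁ a P₂ ∧ TauStar P₂ Q

/-- Observable transitions along a string of (non-`τ`) actions. -/
inductive ObsSeq : Proc → List Act → Proc → Prop where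
  | nil {P Q} : TauStar P Q → ObsSeq P [] Q
  | cons {P a Q s R} : Obs P a Q → ObsSeq Q s R → ObsSeq P (a :: s) R

/-- The failures of a process: pairs `(s, X)` with `s` a string of nonempty actions and
`X` a set of nonempty actions such that `P ⟹s Q` for some `Q` refusing every action of `X`. -/
def failures (P : Proc) : Set (List Act × Set Act) :=
  { sX | (∀ a ∈ sX.1, a.Nonempty) ∧ (∀ a ∈ sX.2, a.Nonempty) ∧
      ∃ Q, ObsSeq P sX.1 Q ∧ ∀ a ∈ sX.2, ¬∃ R, Obs Q a R }

/-- Failures equivalence. -/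
def FailEq (P Q : Proc) : Prop := failures P = failures Q

/-- Weak simulations (with respect to the observable transitions). -/
def IsWeakSim (R : Proc → Proc → Prop) : Prop :=
  ∀ ⦃P Q⦄, R P Q →
    (∀ P', TauStar P P' → ∃ Q', TauStar Q Q' ∧ R P' Q') ∧
    (∀ a P', (a : Act).Nonempty → Obs P a P' → ∃ Q', Obs Q a Q' ∧ R P' Q')

/-- Weak bisimilarity. -/
def WeakBisim (P Q : Proc) : Prop :=
  ∃ R : Proc → Proc → Prop, IsWeakSim R ∧ IsWeakSim (fun x y => R y x) ∧ R P Q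
/-! ## The split name space and the basic combinators -/

/-- Build a bar-preserving partial injective renaming from a partial injective map on names. -/
def Renaming.ofNameFun (f : ℕ → Option ℕ)
    (hf : ∀ ⦃x y z : ℕ⦄, f x = some z → f y = some z → x = y) : Renaming where
  toFun := fun l =>
    match l with
    | .inl n => (f n).map .inl
    | .inr n => (f n).map .inr
  inj := by
    rintro (x | x) (y | y) (z | z) hx hy <;>
      simp only [Option.map_eq_some_iff] at hx hy <;>
      obtain ⟨a, ha, ha'⟩ := hx <;> obtain ⟨b, hb, hb'⟩ := hy <;>
        solve
          | (cases ha'; cases hb'; exact congrArg _ (hf ha hb))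
          | (cases hb')
          | (cases ha')
  bar := by
    rintro (n | n) <;> cases hf : f n <;> simp [Label.bar, hf]

/-- The underlying name of a label. -/
def Label.name : Label → ℕ := Sum.elim id id

/-- The injection `l` of the name space onto its "left" half (even names). -/
def lRen : Renaming := Renaming.ofNameFun (fun n => some (2 * n)) (by intro x y z hx hy; simp only [Option.some.injEq] at hx hy; omega)

/-- The injection `r` of the name space onto its "right" half (odd names). -/
def rRen : Renaming := Renaming.ofNameFun (fun n => some (2 * n + 1)) (by intro x y z hx hy; simp only [Option.some.injEq] at hx hy; omega)

/-- The partial inverse `l⁻¹` of `l`. -/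
def lInv : Renaming :=
  Renaming.ofNameFun (fun n => if n % 2 = 0 then some (n / 2) else none)
    (by intro x y z hx hy; try dsimp only at hx hy
        split at hx <;> split at hy <;> simp_all <;> omega)

/-- The partial inverse `r⁻¹` of `r`. -/
def rInv : Renaming :=
  Renaming.ofNameFun (fun n => if n % 2 = 1 then some (n / 2) else none)
    (by intro x y z hx hy; try dsimp only at hx hy
        split at hx <;> split at hy <;> simp_all <;> omega)

/-- The left half `ℒ_l` of the label space. -/
def LabL : Set Label := {x | x.name % 2 = 0}

/-- The right half `ℒ_r` of the label space. -/
def LabR : Set Label := {x | x.name % 2 = 1}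

/-- Tensor product: disjoint (non-communicating) parallel composition `P[l] | Q[r]`. -/
def tensor (P Q : Proc) : Proc := .par (P.rename lRen) (Q.rename rRen)

/-- Left (forwards) application `⟨Q | P⟩ = ((Q[l] | P) ∖ ℒ_l)[r⁻¹]`. -/
def lapp (Q P : Proc) : Proc := ((Proc.par (Q.rename lRen) P).restrict LabL).rename rInv

/-- Right (reverse) application `(P | R⟩ = ((P | R[r]) ∖ ℒ_r)[l⁻¹]`. -/
def rapp (P R : Proc) : Proc := ((Proc.par P (R.rename rRen)).restrict LabR).rename lInv

/-! ### The three-fold decomposition `𝒩 = 𝒩₁ ∪̇ 𝒩₂ ∪̇ 𝒩₃` and composition -/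

/-- `φ₁₂ : 𝒩 ≅ 𝒩₁ ∪̇ 𝒩₂` (`𝒩ᵢ` = names `≡ i - 1 (mod 3)`), carrying `𝒩_l` onto `𝒩₁`, `𝒩_r` onto `𝒩₂`. -/
def phi12 : Renaming :=
  Renaming.ofNameFun (fun n => some (if n % 2 = 0 then 3 * (n / 2) else 3 * (n / 2) + 1))
    (by intro x y z hx hy; try dsimp only at hx hy
        simp only [Option.some.injEq] at hx hy
        split at hx <;> split at hy <;> omega)

/-- `φ₂₃ : 𝒩 ≅ 𝒩₂ ∪̇ 𝒩₃`, carrying `𝒩_l` onto `𝒩₂`, `𝒩_r` onto `𝒩₃`. -/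
def phi23 : Renaming :=
  Renaming.ofNameFun (fun n => some (if n % 2 = 0 then 3 * (n / 2) + 1 else 3 * (n / 2) + 2))
    (by intro x y z hx hy; try dsimp only at hx hy
        simp only [Option.some.injEq] at hx hy
        split at hx <;> split at hy <;> omega)

/-- The partial inverse `φ₁₃⁻¹` of `φ₁₃ : 𝒩 ≅ 𝒩₁ ∪̇ 𝒩₃`. -/
def phi13Inv : Renaming :=
  Renaming.ofNameFun
    (fun n => if n % 3 = 0 then some (2 * (n / 3)) else if n % 3 = 2 then some (2 * (n / 3) + 1) else none)
    (by intro x y z hx hy; try dsimp only at hx hy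
        split at hx <;> split at hy <;> simp_all <;> omega)

/-- The middle part `𝒩₂` of the label space (as a set of labels). -/
def Lab2 : Set Label := {x | x.name % 3 = 1}

/-- Composition `P ; Q = ((P[φ₁₂] | Q[φ₂₃]) ∖ 𝒩₂)[φ₁₃⁻¹]`. -/
def comp (P Q : Proc) : Proc :=
  ((Proc.par (P.rename phi12) (Q.rename phi23)).restrict Lab2).rename phi13Inv

/-! ### The identity (wire) process -/

/-- The identity process `I = rec X. Σ_{a ∈ Act₊} (l(a) ∪ r(a)‾).X`. -/
noncomputable def Iproc : Proc :=
  .fix (.sum {n | ∃ a : Act, (Encodable.decode n : Option Act) = some a ∧ a.Nonempty}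
    (fun n =>
      match (Encodable.decode n : Option Act) with
      | some a => lRen.onAction a ∪ (rRen.onAction a).image Label.bar
      | none => {Sum.inl 0})
    (fun _ => .var 0)
    (by rintro n ⟨a, ha, hne⟩
        simp only [ha]
        obtain ⟨x, hx⟩ := hne
        refine Finset.Nonempty.mono Finset.subset_union_left ⟨(Sum.map (2 * ·) (2 * ·)) x, ?_⟩
        simp only [Renaming.onAction, Finset.mem_filterMap]
        exact ⟨x, hx, by cases x <;> rfl⟩))

/-! ## Guarded choice combinators, the additive pairing and injections, `!P`, divergence -/

/-- Binary guarded sum `a.P + b.Q` (guards must be non-`τ`). -/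
def gsum2 (a : Act) (P : Proc) (b : Act) (Q : Proc) (ha : a.Nonempty) (hb : b.Nonempty) : Proc :=
  .sum {0, 1} (fun n => if n = 0 then a else b) (fun n => if n = 0 then P else Q)
    (by intro n _; (try dsimp only); split <;> assumption)

/-- Ternary guarded sum `a.P + b.Q + c.R`. -/
def gsum3 (a : Act) (P : Proc) (b : Act) (Q : Proc) (c : Act) (R : Proc)
    (ha : a.Nonempty) (hb : b.Nonempty) (hc : c.Nonempty) : Proc :=
  .sum {0, 1, 2} (fun n => if n = 0 then a else if n = 1 then b else c)
    (fun n => if n = 0 then P else if n = 1 then Q else R)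
    (by intro n _; (try dsimp only); split <;> [skip; split] <;> assumption)

/-- The distinguished names: `α = 0`, `β = 1`, `ω = 2`, `δ = 3`, `γ = 4`, `σ = 5`. -/
def αAct : Act := {Sum.inl 0}
def βAct : Act := {Sum.inl 1}
def αBar : Act := {Sum.inr 0}
def βBar : Act := {Sum.inr 1}
def ωAct : Act := {Sum.inl 2}
def δBar : Act := {Sum.inr 3}
def γBar : Act := {Sum.inr 4}

/-- The additive pairing `⟨P, Q⟩ = r(α).P + r(β).Q`  (`r(α) = 1`, `r(β) = 3`). -/
def pairR (P Q : Proc) : Proc :=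
  gsum2 {Sum.inl 1} P {Sum.inl 3} Q (Finset.singleton_nonempty _) (Finset.singleton_nonempty _)

/-- The plain additive pairing `α.P + β.Q` used in the realizability clauses for `&`. -/
def pairProc (P Q : Proc) : Proc :=
  gsum2 αAct P βAct Q (Finset.singleton_nonempty _) (Finset.singleton_nonempty _)

/-- The left injection `l(P) = l(α)‾.P`  (`l(α) = 0`). -/
def injl (P : Proc) : Proc := .pre {Sum.inr 0} P

/-- The right injection `r(Q) = r(β)‾.Q`  (`r(β) = 3`). -/
def injr (Q : Proc) : Proc := .pre {Sum.inr 3} Q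

/-- The exponential combinator `!P = rec X.(ω.0 + δ.P + γ.(X[l] | X[r]))`. -/
def bangProc (P : Proc) : Proc :=
  .fix (gsum3 ωAct Proc.nil ({Sum.inl 3} : Act) P ({Sum.inl 4} : Act)
    (.par (Proc.rename (.var 0) lRen) (Proc.rename (.var 0) rRen))
    (Finset.singleton_nonempty _) (Finset.singleton_nonempty _) (Finset.singleton_nonempty _))

/-- `P` diverges if there is an infinite sequence of `τ`-transitions from `P`. -/
def Diverges (P : Proc) : Prop :=
  ∃ f : ℕ → Proc, f 0 = P ∧ ∀ n, Step (f n) ∅ (f (n + 1))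

/-- `P ⊥ Q`: closing the system, `P` and `Q` interacting with each other yield no divergence. -/
def Orth (P Q : Proc) : Prop := ¬ Diverges ((Proc.par P Q).restrict Set.univ)

/-!
Both factors of `P ⊗ Q` are relabelled by total renamings with disjoint ranges, so they can
never synchronise: every transition of `P ⊗ Q` is a simultaneous move of the two factors, each
of which may stay idle. A transition labelled `l(a)` with `a ≠ τ` is therefore an `a`-transition
of `P` while `Q` moves silently, and `(s, X)` is a failure of `P` iff `(l s, l X)` is a failure of
`P ⊗ Q`. The right factor is handled in the same way after commuting the parallel composition,
which is a strong bisimulation and hence preserves failures.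
-/

theorem Label.bar_bar (x : Label) : x.bar.bar = x := by
  cases x <;> rfl

namespace Renaming

def IsTotal (f : Renaming) : Prop := ∀ x, (f.toFun x).isSome

def DisjointRange (f g : Renaming) : Prop :=
  ∀ ⦃x y z : Label⦄, f.toFun x = some z → g.toFun y ≠ some z

variable {f g : Renaming} {a b c : Act}

theorem DisjointRange.symm (h : f.DisjointRange g) : g.DisjointRange f :=
  fun _ _ _ hg hf => h hf hg

theorem mem_onAction {y : Label} : y ∈ f.onAction a ↔ ∃ x ∈ a, f.toFun x = some y :=
  Finset.mem_filterMap _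

theorem onAction_empty (f : Renaming) : f.onAction ∅ = ∅ := rfl

theorem IsTotal.onAction_nonempty_iff (hf : f.IsTotal) :
    (f.onAction a).Nonempty ↔ a.Nonempty := by
  constructor
  · rintro ⟨y, hy⟩
    obtain ⟨x, hx, -⟩ := mem_onAction.mp hy
    exact ⟨x, hx⟩
  · rintro ⟨x, hx⟩
    obtain ⟨y, hy⟩ := Option.isSome_iff_exists.mp (hf x)
    exact ⟨y, mem_onAction.mpr ⟨x, hx, hy⟩⟩

theorem IsTotal.onAction_eq_empty_iff (hf : f.IsTotal) : f.onAction a = ∅ ↔ a = ∅ := by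
  simpa only [Finset.not_nonempty_iff_eq_empty] using hf.onAction_nonempty_iff.not

theorem IsTotal.onAction_injective (hf : f.IsTotal) : Function.Injective f.onAction := by
  have subset_of_eq : ∀ {a b : Act}, f.onAction a = f.onAction b → a ⊆ b := by
    intro a b hab x hx
    obtain ⟨y, hy⟩ := Option.isSome_iff_exists.mp (hf x)
    obtain ⟨x', hx', hx'y⟩ := mem_onAction.mp (hab ▸ mem_onAction.mpr ⟨x, hx, hy⟩)
    exact f.inj hx'y hy ▸ hx'
  exact fun a b hab => (subset_of_eq hab).antisymm (subset_of_eq hab.symm)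

theorem DisjointRange.disjoint_onAction (h : f.DisjointRange g) (a c : Act) :
    Disjoint (f.onAction a) (g.onAction c) := by
  refine Finset.disjoint_left.mpr fun y hya hyc => ?_
  obtain ⟨x, -, hx⟩ := mem_onAction.mp hya
  obtain ⟨x', -, hx'⟩ := mem_onAction.mp hyc
  exact h hx hx'

-- As `g` commutes with `bar`, every label of `b` would lie in the ranges of both `f` and `g`.
theorem DisjointRange.eq_empty_of_sync (h : f.DisjointRange g) (hb : b ⊆ f.onAction a)
    (hb' : b.image Label.bar ⊆ g.onAction c) : b = ∅ := by
  refine Finset.eq_empty_of_forall_notMem fun y hy => ?_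
  obtain ⟨x, -, hx⟩ := mem_onAction.mp (hb hy)
  obtain ⟨x', -, hx'⟩ := mem_onAction.mp (hb' (Finset.mem_image_of_mem _ hy))
  refine h hx (y := x'.bar) ?_
  rw [g.bar, hx', Option.map_some, Label.bar_bar]

end Renaming

section Transitions

variable {f g : Renaming} {P P' Q Q' R : Proc} {a A : Act} {s : List Act}

theorem Step.rename_inv (h : Step (P.rename f) A R) :
    ∃ a P', Step P a P' ∧ A = f.onAction a ∧ R = P'.rename f := by
  cases h with
  | rename hs _ => exact ⟨_, _, hs, rfl, rfl⟩

theorem Step.rename_of_isTotal (hf : f.IsTotal) (h : Step P a P') :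
    Step (P.rename f) (f.onAction a) (P'.rename f) :=
  .rename h fun l _ => hf l

def StepOrIdle (P : Proc) (a : Act) (P' : Proc) : Prop :=
  Step P a P' ∨ (a = ∅ ∧ P' = P)

theorem StepOrIdle.tauStar (h : StepOrIdle P ∅ P') : TauStar P P' := by
  rcases h with h | ⟨-, rfl⟩
  · exact .single h
  · exact .refl

theorem Step.par_rename_inv (hfg : f.DisjointRange g)
    (h : Step (.par (P.rename f) (Q.rename g)) A R) :
    ∃ a c P' Q', A = f.onAction a ∪ g.onAction c ∧ R = .par (P'.rename f) (Q'.rename g) ∧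
      StepOrIdle P a P' ∧ StepOrIdle Q c Q' := by
  cases h with
  | parL hs =>
    obtain ⟨a, P', hP, rfl, rfl⟩ := hs.rename_inv
    exact ⟨a, ∅, P', Q, by simp [Renaming.onAction_empty], rfl, .inl hP, .inr ⟨rfl, rfl⟩⟩
  | parR hs =>
    obtain ⟨c, Q', hQ, rfl, rfl⟩ := hs.rename_inv
    exact ⟨∅, c, P, Q', by simp [Renaming.onAction_empty], rfl, .inr ⟨rfl, rfl⟩, .inl hQ⟩
  | sync hPs hQs =>
    obtain ⟨a, P', hP, hfa, rfl⟩ := hPs.rename_inv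
    obtain ⟨c, Q', hQ, hgc, rfl⟩ := hQs.rename_inv
    obtain rfl := hfg.eq_empty_of_sync (hfa ▸ Finset.subset_union_right)
      (hgc ▸ Finset.subset_union_left)
    rw [Finset.union_empty] at hfa
    rw [Finset.image_empty, Finset.empty_union] at hgc
    exact ⟨a, c, P', Q', by rw [hfa, hgc], rfl, .inl hP, .inl hQ⟩

theorem TauStar.par_rename_inv (hf : f.IsTotal) (hg : g.IsTotal) (hfg : f.DisjointRange g)
    (h : TauStar (.par (P.rename f) (Q.rename g)) R) :
    ∃ P' Q' : Proc, TauStar P P' ∧ TauStar Q Q' ∧ R = .par (P'.rename f) (Q'.rename g) := by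
  induction h with
  | refl => exact ⟨P, Q, .refl, .refl, rfl⟩
  | tail _ hstep ih =>
    obtain ⟨P', Q', hP, hQ, rfl⟩ := ih
    obtain ⟨a, c, P'', Q'', hac, rfl, hP', hQ'⟩ := hstep.par_rename_inv hfg
    obtain ⟨hfa, hgc⟩ := Finset.union_eq_empty.mp hac.symm
    rw [hf.onAction_eq_empty_iff] at hfa
    rw [hg.onAction_eq_empty_iff] at hgc
    subst hfa hgc
    exact ⟨P'', Q'', hP.trans hP'.tauStar, hQ.trans hQ'.tauStar, rfl⟩

theorem Step.par_rename_left_inv (hf : f.IsTotal) (hg : g.IsTotal) (hfg : f.DisjointRange g)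
    (ha : a.Nonempty) (h : Step (.par (P.rename f) (Q.rename g)) (f.onAction a) R) :
    ∃ P' Q' : Proc, Step P a P' ∧ TauStar Q Q' ∧ R = .par (P'.rename f) (Q'.rename g) := by
  obtain ⟨a', c, P', Q', hA, rfl, hP, hQ⟩ := h.par_rename_inv hfg
  obtain rfl : c = ∅ := by
    have hsub : g.onAction c ⊆ f.onAction a := hA ▸ Finset.subset_union_right
    rw [← hg.onAction_eq_empty_iff, ← Finset.disjoint_self_iff_empty]
    exact Finset.disjoint_of_subset_left hsub (hfg.disjoint_onAction a c)
  rw [Renaming.onAction_empty, Finset.union_empty] at hA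
  obtain rfl := hf.onAction_injective hA
  rcases hP with hP | ⟨rfl, -⟩
  · exact ⟨P', Q', hP, hQ.tauStar, rfl⟩
  · exact absurd ha Finset.not_nonempty_empty

theorem Obs.par_rename_left_inv (hf : f.IsTotal) (hg : g.IsTotal) (hfg : f.DisjointRange g)
    (ha : a.Nonempty) (h : Obs (.par (P.rename f) (Q.rename g)) (f.onAction a) R) :
    ∃ P' Q' : Proc, Obs P a P' ∧ R = .par (P'.rename f) (Q'.rename g) := by
  obtain ⟨R₁, R₂, h₁, h₂, h₃⟩ := h
  obtain ⟨P₁, Q₁, hP₁, -, rfl⟩ := h₁.par_rename_inv hf hg hfg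
  obtain ⟨P₂, Q₂, hP₂, -, rfl⟩ := h₂.par_rename_left_inv hf hg hfg ha
  obtain ⟨P₃, Q₃, hP₃, -, rfl⟩ := h₃.par_rename_inv hf hg hfg
  exact ⟨P₃, Q₃, ⟨P₁, P₂, hP₁, hP₂, hP₃⟩, rfl⟩

theorem ObsSeq.par_rename_left_inv (hf : f.IsTotal) (hg : g.IsTotal) (hfg : f.DisjointRange g)
    (hs : ∀ a ∈ s, a.Nonempty)
    (h : ObsSeq (.par (P.rename f) (Q.rename g)) (s.map f.onAction) R) :
    ∃ P' Q' : Proc, ObsSeq P s P' ∧ R = .par (P'.rename f) (Q'.rename g) := by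
  induction s generalizing P Q with
  | nil =>
    cases h with
    | nil h =>
      obtain ⟨P', Q', hP, -, rfl⟩ := h.par_rename_inv hf hg hfg
      exact ⟨P', Q', .nil hP, rfl⟩
  | cons a s ih =>
    cases h with
    | cons hobs hrest =>
      obtain ⟨P', Q', hP, rfl⟩ := hobs.par_rename_left_inv hf hg hfg (hs a (by simp))
      obtain ⟨P'', Q'', hP', rfl⟩ := ih (fun b hb => hs b (by simp [hb])) hrest
      exact ⟨P'', Q'', .cons hP hP', rfl⟩

theorem TauStar.par_rename_left (hf : f.IsTotal) (h : TauStar P P') (g : Renaming) (Q : Proc) :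
    TauStar (.par (P.rename f) (Q.rename g)) (.par (P'.rename f) (Q.rename g)) :=
  Relation.ReflTransGen.lift (fun X : Proc => Proc.par (X.rename f) (Q.rename g))
    (fun _ _ hX => Step.parL (hX.rename_of_isTotal hf)) _ _ h

theorem Obs.par_rename_left (hf : f.IsTotal) (h : Obs P a P') (g : Renaming) (Q : Proc) :
    Obs (.par (P.rename f) (Q.rename g)) (f.onAction a) (.par (P'.rename f) (Q.rename g)) := by
  obtain ⟨P₁, P₂, h₁, h₂, h₃⟩ := h
  exact ⟨_, _, h₁.par_rename_left hf g Q, .parL (h₂.rename_of_isTotal hf),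
    h₃.par_rename_left hf g Q⟩

theorem ObsSeq.par_rename_left (hf : f.IsTotal) (h : ObsSeq P s P') (g : Renaming) (Q : Proc) :
    ObsSeq (.par (P.rename f) (Q.rename g)) (s.map f.onAction)
      (.par (P'.rename f) (Q.rename g)) := by
  induction h with
  | nil h => exact .nil (h.par_rename_left hf g Q)
  | cons hobs _ ih => exact .cons (hobs.par_rename_left hf g Q) ih

end Transitions

theorem mem_failures_par_rename_left_iff {f g : Renaming} (hf : f.IsTotal) (hg : g.IsTotal)
    (hfg : f.DisjointRange g) (P Q : Proc) (s : List Act) (X : Set Act) :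
    (s.map f.onAction, f.onAction '' X) ∈ failures (.par (P.rename f) (Q.rename g)) ↔
      (s, X) ∈ failures P := by
  simp only [failures, Set.mem_ofPred_eq, List.forall_mem_map, Set.forall_mem_image,
    hf.onAction_nonempty_iff]
  refine and_congr_right fun hs => and_congr_right fun hX => ⟨?_, ?_⟩
  · rintro ⟨R, hR, hrefuse⟩
    obtain ⟨P', Q', hP', rfl⟩ := hR.par_rename_left_inv hf hg hfg hs
    exact ⟨P', hP', fun a ha ⟨S, hS⟩ => hrefuse ha ⟨_, hS.par_rename_left hf g Q'⟩⟩
  · rintro ⟨P', hP', hrefuse⟩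
    refine ⟨_, hP'.par_rename_left hf g Q, fun a ha ⟨S, hS⟩ => ?_⟩
    obtain ⟨P'', -, hP'', -⟩ := hS.par_rename_left_inv hf hg hfg (hX ha)
    exact hrefuse a ha ⟨P'', hP''⟩

def IsStrongSim (R : Proc → Proc → Prop) : Prop :=
  ∀ ⦃P Q⦄, R P Q → ∀ a P', Step P a P' → ∃ Q', Step Q a Q' ∧ R P' Q'

namespace IsStrongSim

variable {R : Proc → Proc → Prop} {P P' Q : Proc} {a : Act} {s : List Act}

theorem tauStar (hR : IsStrongSim R) (hPQ : R P Q) (h : TauStar P P') :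
    ∃ Q', TauStar Q Q' ∧ R P' Q' := by
  induction h with
  | refl => exact ⟨Q, .refl, hPQ⟩
  | tail _ hstep ih =>
    obtain ⟨Q₁, hQ₁, hR₁⟩ := ih
    obtain ⟨Q₂, hQ₂, hR₂⟩ := hR hR₁ _ _ hstep
    exact ⟨Q₂, hQ₁.tail hQ₂, hR₂⟩

theorem obs (hR : IsStrongSim R) (hPQ : R P Q) (h : Obs P a P') :
    ∃ Q', Obs Q a Q' ∧ R P' Q' := by
  obtain ⟨P₁, P₂, h₁, h₂, h₃⟩ := h
  obtain ⟨Q₁, hQ₁, hR₁⟩ := hR.tauStar hPQ h₁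
  obtain ⟨Q₂, hQ₂, hR₂⟩ := hR hR₁ _ _ h₂
  obtain ⟨Q₃, hQ₃, hR₃⟩ := hR.tauStar hR₂ h₃
  exact ⟨Q₃, ⟨Q₁, Q₂, hQ₁, hQ₂, hQ₃⟩, hR₃⟩

theorem obsSeq (hR : IsStrongSim R) (hPQ : R P Q) (h : ObsSeq P s P') :
    ∃ Q', ObsSeq Q s Q' ∧ R P' Q' := by
  induction h generalizing Q with
  | nil h =>
    obtain ⟨Q', hQ', hR'⟩ := hR.tauStar hPQ h
    exact ⟨Q', .nil hQ', hR'⟩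
  | cons hobs _ ih =>
    obtain ⟨Q₁, hQ₁, hR₁⟩ := hR.obs hPQ hobs
    obtain ⟨Q₂, hQ₂, hR₂⟩ := ih hR₁
    exact ⟨Q₂, .cons hQ₁ hQ₂, hR₂⟩

theorem failures_subset (hR : IsStrongSim R) (hsymm : ∀ ⦃P Q⦄, R P Q → R Q P)
    (hPQ : R P Q) : failures P ⊆ failures Q := by
  rintro ⟨s, X⟩ ⟨hs, hX, P', hP', hrefuse⟩
  obtain ⟨Q', hQ', hR'⟩ := hR.obsSeq hPQ hP'
  refine ⟨hs, hX, Q', hQ', fun a ha ⟨T, hT⟩ => hrefuse a ha ?_⟩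
  obtain ⟨S, hS, -⟩ := hR.obs (hsymm hR') hT
  exact ⟨S, hS⟩

end IsStrongSim

theorem Step.par_swap {P Q R : Proc} {A : Act} (h : Step (.par P Q) A R) :
    ∃ P' Q', R = .par P' Q' ∧ Step (.par Q P) A (.par Q' P') := by
  cases h with
  | parL h => exact ⟨_, _, rfl, .parR h⟩
  | parR h => exact ⟨_, _, rfl, .parL h⟩
  | @sync _ _ _ _ a b c hP hQ hab hbc hac =>
    refine ⟨_, _, rfl, ?_⟩
    -- After the swap `Q` synchronises on `b.image bar`, whose `bar`-image is `b` again.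
    have hbar : (b.image Label.bar).image Label.bar = b := by
      simp only [Finset.image_image, Function.comp_def, Label.bar_bar, Finset.image_id']
    rw [Finset.union_comm a c]
    refine .sync (b := b.image Label.bar) (by rwa [Finset.union_comm]) ?_ hbc.symm ?_ hac.symm
    · rwa [hbar, Finset.union_comm]
    · rwa [hbar, disjoint_comm]

theorem failures_par_comm (P Q : Proc) : failures (.par P Q) = failures (.par Q P) := by
  let swapped : Proc → Proc → Prop := fun X Y => ∃ P Q, X = .par P Q ∧ Y = .par Q P
  have hsim : IsStrongSim swapped := by
    rintro _ _ ⟨P, Q, rfl, rfl⟩ a R h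
    obtain ⟨P', Q', rfl, h'⟩ := h.par_swap
    exact ⟨_, h', P', Q', rfl, rfl⟩
  have hsymm : ∀ ⦃X Y⦄, swapped X Y → swapped Y X := by
    rintro _ _ ⟨P, Q, rfl, rfl⟩
    exact ⟨Q, P, rfl, rfl⟩
  exact (hsim.failures_subset hsymm ⟨P, Q, rfl, rfl⟩).antisymm
    (hsim.failures_subset hsymm ⟨Q, P, rfl, rfl⟩)

theorem lRen_isTotal : lRen.IsTotal := by
  rintro (n | n) <;> rfl

theorem rRen_isTotal : rRen.IsTotal := by
  rintro (n | n) <;> rfl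

theorem lRen_disjointRange_rRen : lRen.DisjointRange rRen := by
  rintro (x | x) (y | y) (z | z) hx hy <;>
    simp only [lRen, rRen, Renaming.ofNameFun, Option.map_some, Option.some.injEq,
      Sum.inl.injEq, Sum.inr.injEq, reduceCtorEq] at hx hy <;> omega

/-- **The tensor product of processes is injective up to failures equivalence.** -/
theorem tensor_injective_failures (P₁ P₂ Q₁ Q₂ : Proc)
    (h : FailEq (tensor P₁ P₂) (tensor Q₁ Q₂)) :
    FailEq P₁ Q₁ ∧ FailEq P₂ Q₂ := by
  unfold FailEq tensor at h
  have hlr := lRen_disjointRange_rRen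
  have h_swap : failures (.par (P₂.rename rRen) (P₁.rename lRen)) =
      failures (.par (Q₂.rename rRen) (Q₁.rename lRen)) := by
    rwa [failures_par_comm, failures_par_comm (Q₂.rename rRen)]
  refine ⟨Set.ext fun ⟨s, X⟩ => ?_, Set.ext fun ⟨s, X⟩ => ?_⟩
  · rw [← mem_failures_par_rename_left_iff lRen_isTotal rRen_isTotal hlr P₁ P₂, h,
      mem_failures_par_rename_left_iff lRen_isTotal rRen_isTotal hlr Q₁ Q₂]
  · rw [← mem_failures_par_rename_left_iff rRen_isTotal lRen_isTotal hlr.symm P₂ P₁, h_swap,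
      mem_failures_par_rename_left_iff rRen_isTotal lRen_isTotal hlr.symm Q₂ Q₁]
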